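/- arXiv:math/0501338 — 3 statements merged into one kernel-verified Lean document; each statement's English description precedes it below -/
import Mathlib

section
/- Every 2×2 integer matrix with determinant 1 all of whose entries are nonnegative can be written as a finite product of copies of the matrices T₁ and T₂ (with the identity matrix corresponding to the empty product). -/
def T1 : Matrix (Fin 2) (Fin 2) ℤ := !![1, 1; 0, 1]

def T2 : Matrix (Fin 2) (Fin 2) ℤ := !![1, 0; 1, 1]

/-!
Left multiplication by `T₁⁻¹` subtracts the second row from the first, and by `T₂⁻¹` the first
from the second. The rows of a nonnegative integer matrix of determinant 1 other than the identity
are comparable entrywise, so one of these subtractions keeps the matrix nonnegative and strictly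
lowers its entry sum: the factorisation is the Euclidean algorithm run on the rows.
-/

open Matrix

theorem T1_mul_sub_row_one (a b c d : ℤ) : T1 * !![a - c, b - d; c, d] = !![a, b; c, d] := by
  simp [T1]

theorem T2_mul_sub_row_zero (a b c d : ℤ) : T2 * !![a, b; c - a, d - b] = !![a, b; c, d] := by
  simp [T2]

theorem rows_le_or_eq_one_of_mul_sub_mul_eq_one {a b c d : ℤ} (hb : 0 ≤ b) (hc : 0 ≤ c)
    (hd : 0 ≤ d) (h : a * d - b * c = 1) :
    (c ≤ a ∧ d ≤ b) ∨ (a ≤ c ∧ b ≤ d) ∨ (a = 1 ∧ b = 0 ∧ c = 0 ∧ d = 1) := by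
  by_cases hdb : d ≤ b
  · exact Or.inl ⟨by nlinarith, hdb⟩
  by_cases hac : a ≤ c
  · exact Or.inr (Or.inl ⟨hac, by omega⟩)
  right; right
  have hprod : (c + 1) * (b + 1) ≤ a * d :=
    mul_le_mul (by omega) (by omega) (by omega) (by omega)
  obtain ⟨rfl, rfl⟩ : b = 0 ∧ c = 0 := by constructor <;> nlinarith
  have had : a * d = 1 := by omega
  exact ⟨by nlinarith, rfl, rfl, by nlinarith⟩

theorem mem_closure_T1_T2_of_nonneg (a b c d : ℤ) (ha : 0 ≤ a) (hb : 0 ≤ b) (hc : 0 ≤ c)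
    (hd : 0 ≤ d) (h : a * d - b * c = 1) : !![a, b; c, d] ∈ Submonoid.closure {T1, T2} := by
  have hab : 0 < a + b := by nlinarith
  have hcd : 0 < c + d := by nlinarith
  rcases rows_le_or_eq_one_of_mul_sub_mul_eq_one hb hc hd h with
    ⟨hca, hdb⟩ | ⟨hac, hbd⟩ | ⟨rfl, rfl, rfl, rfl⟩
  · rw [← T1_mul_sub_row_one]
    exact mul_mem (Submonoid.subset_closure (by simp)) <|
      mem_closure_T1_T2_of_nonneg _ _ c d (by omega) (by omega) hc hd (by linear_combination h)
  · rw [← T2_mul_sub_row_zero]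
    exact mul_mem (Submonoid.subset_closure (by simp)) <|
      mem_closure_T1_T2_of_nonneg a b _ _ ha hb (by omega) (by omega) (by linear_combination h)
  · rw [← one_fin_two]
    exact one_mem _
termination_by (a + b + c + d).toNat

/-- Every 2×2 integer matrix with determinant 1 and nonnegative entries is a finite
product of copies of `T₁` and `T₂` (the identity being the empty product). -/
theorem unimodular_nonneg_matrix_eq_prod_of_T1_T2
    (M : Matrix (Fin 2) (Fin 2) ℤ) (hdet : M.det = 1) (hpos : ∀ i j, 0 ≤ M i j) :
    ∃ L : List (Matrix (Fin 2) (Fin 2) ℤ),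
      (∀ A ∈ L, A = T1 ∨ A = T2) ∧ L.prod = M := by
  rw [det_fin_two] at hdet
  have hM := mem_closure_T1_T2_of_nonneg _ _ _ _ (hpos 0 0) (hpos 0 1) (hpos 1 0) (hpos 1 1) hdet
  rw [← eta_fin_two M] at hM
  simpa using Submonoid.exists_list_of_mem_closure hM
end

section
/- The monoid of 2×2 integer matrices with determinant 1 and nonnegative entries is a free monoid on the two generators T₁ and T₂: the monoid homomorphism from the free monoid on two generators to 2×2 integer matrices sending the first generator to T₁ and the second to T₂ is injective, and its image is exactly the set of determinant-1 matrices with nonnegative entries. -/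
/-- The monoid homomorphism from the free monoid on two generators to 2×2 integer
matrices sending the first generator to `T₁` and the second one to `T₂`. -/
def toMatrix : FreeMonoid (Fin 2) →* Matrix (Fin 2) (Fin 2) ℤ :=
  FreeMonoid.lift fun i => if i = 0 then T1 else T2

/-! If `M = !![a, b; c, d]` has determinant one and nonnegative entries and `M ≠ 1`, then one row
dominates the other entrywise (`c > a` forces `d > b`, and `c < a`, `d > b` together force
`M = 1`). Subtracting the smaller row from the larger one writes `M = T₁ * N` or `M = T₂ * N`
with `N` of the same kind and smaller entry sum, which gives surjectivity by descent.
Conversely, for such `N` the top row sum of `T₁ * N` exceeds the bottom one and the reverse holds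
for `T₂ * N`, so the first letter of a word is read off its image; since `T₁` and `T₂` are
invertible over `ℤ` they can be cancelled, and injectivity follows letter by letter. -/

open Matrix

theorem FreeMonoid.lift_injective_of_leading {α M : Type*} [Monoid M] {f : α → M}
    (leading : M → Option α) (hf : ∀ a, IsLeftRegular (f a)) (hone : leading 1 = none)
    (hleading : ∀ a w, leading (f a * lift f w) = some a) :
    Function.Injective (lift f) := by
  intro v w h
  induction v using FreeMonoid.inductionOn' generalizing w with
  | one =>
    cases w with
    | one => rfl
    | of_mul b w => simpa [hone, hleading] using congrArg leading h
  | of_mul a v ih =>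
    cases w with
    | one => simpa [hone, hleading] using congrArg leading h.symm
    | of_mul b w =>
      simp only [map_mul, lift_eval_of] at h
      obtain rfl : a = b := Option.some_injective _ (by rw [← hleading a v, h, hleading])
      rw [ih (hf a h)]

def nonnegUnimodular : Submonoid (Matrix (Fin 2) (Fin 2) ℤ) where
  carrier := {M | M.det = 1 ∧ ∀ i j, 0 ≤ M i j}
  mul_mem' {A B} hA hB := ⟨by rw [det_mul, hA.1, hB.1, one_mul], fun i j =>
    mul_apply (M := A) ▸ Finset.sum_nonneg fun k _ => mul_nonneg (hA.2 i k) (hB.2 k j)⟩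
  one_mem' := ⟨det_one, fun i j => by rw [one_apply]; split_ifs <;> norm_num⟩

theorem fin_two_mem_nonnegUnimodular_iff {a b c d : ℤ} :
    !![a, b; c, d] ∈ nonnegUnimodular ↔ a * d - b * c = 1 ∧ 0 ≤ a ∧ 0 ≤ b ∧ 0 ≤ c ∧ 0 ≤ d := by
  simp [nonnegUnimodular, Fin.forall_fin_two, and_assoc]

theorem row_sums_pos_of_det_eq_one {a b c d : ℤ} (hdet : a * d - b * c = 1)
    (ha : 0 ≤ a) (hb : 0 ≤ b) (hc : 0 ≤ c) (hd : 0 ≤ d) : 0 < a + b ∧ 0 < c + d := by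
  constructor <;> by_contra! h
  · obtain ⟨rfl, rfl⟩ : a = 0 ∧ b = 0 := by omega
    simp at hdet
  · obtain ⟨rfl, rfl⟩ : c = 0 ∧ d = 0 := by omega
    simp at hdet

theorem eq_one_or_rows_le_of_det_eq_one {a b c d : ℤ} (hdet : a * d - b * c = 1)
    (ha : 0 ≤ a) (hb : 0 ≤ b) (hc : 0 ≤ c) :
    (a = 1 ∧ b = 0 ∧ c = 0 ∧ d = 1) ∨ (c ≤ a ∧ d ≤ b) ∨ (a ≤ c ∧ b ≤ d) := by
  have hdom : a < c → b < d := fun h => by nlinarith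
  by_cases h₁ : c ≤ a ∧ d ≤ b
  · exact Or.inr (Or.inl h₁)
  by_cases h₂ : a ≤ c ∧ b ≤ d
  · exact Or.inr (Or.inr h₂)
  obtain ⟨hc_lt, hb_lt⟩ : c < a ∧ b < d := by omega
  obtain ⟨rfl, rfl⟩ : b = 0 ∧ c = 0 := by constructor <;> nlinarith
  have had : a * d = 1 := by simpa using hdet
  obtain rfl := Int.eq_one_of_mul_eq_one_right ha had
  simp_all

theorem T1_mul_fin_two (a b c d : ℤ) : T1 * !![a, b; c, d] = !![a + c, b + d; c, d] := by
  simp [T1]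

theorem T2_mul_fin_two (a b c d : ℤ) : T2 * !![a, b; c, d] = !![a, b; a + c, b + d] := by
  simp [T2]

theorem det_T1 : T1.det = 1 := by simp [T1]

theorem det_T2 : T2.det = 1 := by simp [T2]

theorem T1_mem_nonnegUnimodular : T1 ∈ nonnegUnimodular := by
  simp [T1, fin_two_mem_nonnegUnimodular_iff]

theorem T2_mem_nonnegUnimodular : T2 ∈ nonnegUnimodular := by
  simp [T2, fin_two_mem_nonnegUnimodular_iff]

theorem toMatrix_mem_nonnegUnimodular (w : FreeMonoid (Fin 2)) :
    toMatrix w ∈ nonnegUnimodular := by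
  suffices MonoidHom.mrange toMatrix ≤ nonnegUnimodular from this ⟨w, rfl⟩
  rw [toMatrix, FreeMonoid.mrange_lift, Submonoid.closure_le]
  rintro _ ⟨i, rfl⟩
  fin_cases i
  exacts [T1_mem_nonnegUnimodular, T2_mem_nonnegUnimodular]

theorem isLeftRegular_of_det_eq_one {A : Matrix (Fin 2) (Fin 2) ℤ} (h : A.det = 1) :
    IsLeftRegular A :=
  ((isUnit_iff_isUnit_det A).2 (h ▸ isUnit_one)).isRegular.left

def leadingGenerator (M : Matrix (Fin 2) (Fin 2) ℤ) : Option (Fin 2) :=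
  if M 1 0 + M 1 1 < M 0 0 + M 0 1 then some 0
  else if M 0 0 + M 0 1 < M 1 0 + M 1 1 then some 1 else none

theorem leadingGenerator_one : leadingGenerator 1 = none := by
  simp [leadingGenerator]

theorem leadingGenerator_T1_mul {N : Matrix (Fin 2) (Fin 2) ℤ} (hN : N ∈ nonnegUnimodular) :
    leadingGenerator (T1 * N) = some 0 := by
  obtain ⟨a, b, c, d, rfl⟩ : ∃ a b c d, N = !![a, b; c, d] := ⟨_, _, _, _, eta_fin_two N⟩
  obtain ⟨hdet, ha, hb, hc, hd⟩ := fin_two_mem_nonnegUnimodular_iff.1 hN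
  have hrow := (row_sums_pos_of_det_eq_one hdet ha hb hc hd).1
  simp only [leadingGenerator, T1_mul_fin_two, of_apply, cons_val_zero, cons_val_one]
  rw [if_pos (by omega)]

theorem leadingGenerator_T2_mul {N : Matrix (Fin 2) (Fin 2) ℤ} (hN : N ∈ nonnegUnimodular) :
    leadingGenerator (T2 * N) = some 1 := by
  obtain ⟨a, b, c, d, rfl⟩ : ∃ a b c d, N = !![a, b; c, d] := ⟨_, _, _, _, eta_fin_two N⟩
  obtain ⟨hdet, ha, hb, hc, hd⟩ := fin_two_mem_nonnegUnimodular_iff.1 hN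
  have hrow := (row_sums_pos_of_det_eq_one hdet ha hb hc hd).2
  simp only [leadingGenerator, T2_mul_fin_two, of_apply, cons_val_zero, cons_val_one]
  rw [if_neg (by omega), if_pos (by omega)]

theorem toMatrix_injective : Function.Injective toMatrix := by
  refine FreeMonoid.lift_injective_of_leading leadingGenerator (fun i => ?_) leadingGenerator_one
    fun i w => ?_
  · fin_cases i
    exacts [isLeftRegular_of_det_eq_one det_T1, isLeftRegular_of_det_eq_one det_T2]
  · fin_cases i
    exacts [leadingGenerator_T1_mul (toMatrix_mem_nonnegUnimodular w),
      leadingGenerator_T2_mul (toMatrix_mem_nonnegUnimodular w)]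

def entrySum (M : Matrix (Fin 2) (Fin 2) ℤ) : ℕ := ∑ i, ∑ j, (M i j).toNat

theorem exists_eq_T1_mul_or_T2_mul {M : Matrix (Fin 2) (Fin 2) ℤ} (hM : M ∈ nonnegUnimodular)
    (hM1 : M ≠ 1) :
    ∃ N ∈ nonnegUnimodular, (M = T1 * N ∨ M = T2 * N) ∧ entrySum N < entrySum M := by
  obtain ⟨a, b, c, d, rfl⟩ : ∃ a b c d, M = !![a, b; c, d] := ⟨_, _, _, _, eta_fin_two M⟩
  obtain ⟨hdet, ha, hb, hc, hd⟩ := fin_two_mem_nonnegUnimodular_iff.1 hM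
  obtain ⟨hab, hcd⟩ := row_sums_pos_of_det_eq_one hdet ha hb hc hd
  rcases eq_one_or_rows_le_of_det_eq_one hdet ha hb hc with
    ⟨rfl, rfl, rfl, rfl⟩ | ⟨hca, hdb⟩ | ⟨hac, hbd⟩
  · exact absurd one_fin_two.symm hM1
  · refine ⟨!![a - c, b - d; c, d], ?_, Or.inl ?_, ?_⟩
    · exact fin_two_mem_nonnegUnimodular_iff.2
        ⟨by linear_combination hdet, by omega, by omega, hc, hd⟩
    · rw [T1_mul_fin_two]; simp
    · simp only [entrySum, Fin.sum_univ_two, of_apply, cons_val', cons_val_fin_one, cons_val_zero,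
        cons_val_one]
      omega
  · refine ⟨!![a, b; c - a, d - b], ?_, Or.inr ?_, ?_⟩
    · exact fin_two_mem_nonnegUnimodular_iff.2
        ⟨by linear_combination hdet, ha, hb, by omega, by omega⟩
    · rw [T2_mul_fin_two]; simp
    · simp only [entrySum, Fin.sum_univ_two, of_apply, cons_val', cons_val_fin_one, cons_val_zero,
        cons_val_one]
      omega

theorem exists_toMatrix_eq_of_mem {M : Matrix (Fin 2) (Fin 2) ℤ} (hM : M ∈ nonnegUnimodular) :
    ∃ w, toMatrix w = M := by
  by_cases hM1 : M = 1
  · exact ⟨1, by rw [map_one, hM1]⟩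
  obtain ⟨N, hN, hMN, hlt⟩ := exists_eq_T1_mul_or_T2_mul hM hM1
  obtain ⟨w, rfl⟩ := exists_toMatrix_eq_of_mem hN
  rcases hMN with rfl | rfl
  exacts [⟨.of 0 * w, by simp [toMatrix]⟩, ⟨.of 1 * w, by simp [toMatrix]⟩]
termination_by entrySum M

/-- The monoid of 2×2 integer matrices with determinant 1 and nonnegative entries is free
on the generators `T₁`, `T₂`: the canonical map from the free monoid on two generators is
injective and its range is exactly the set of determinant-1 matrices with nonnegative
entries. -/
theorem unimodular_nonneg_matrices_free_on_T1_T2 :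
    Function.Injective ⇑toMatrix ∧
      Set.range ⇑toMatrix =
        {M : Matrix (Fin 2) (Fin 2) ℤ | M.det = 1 ∧ ∀ i j, 0 ≤ M i j} :=
  ⟨toMatrix_injective, Set.ext fun _ =>
    ⟨by rintro ⟨w, rfl⟩; exact toMatrix_mem_nonnegUnimodular w, exists_toMatrix_eq_of_mem⟩⟩
end

section
/- Let α, β, m be real numbers with α > 0, β > 0, 0 < m < α + β, and α/β irrational. Then there exist positive integers u, y and nonnegative integers v, w such that 0 < u·α − v·β < m, 0 < y·β − w·α < m, and (u·α − v·β) + (y·β − w·α) > m. (These two quantities are the transversal measures of the m-dependent basic transversal cycles a^m(+) = u·a + v·b and b^m(+) = w·a + y·b on a 2-torus carrying a straight-line flow with basic transversal measures |a| = α, |b| = β and a removed transversal segment of measure m: each measure is less than m but their sum is greater than m.) -/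
/-!
Since `α / β` is irrational, the natural multiples of `α` are dense modulo `β`, and they return
to every open set for arbitrarily large multipliers. Hence the differences `u * α - v * β` with
`u v : ℕ` meet every open interval. Choose `x = u * α - v * β` in `(0, m)`, and then, with the
roles of `α` and `β` exchanged, `y * β - w * α` in `(m - x, m)`.
-/

open Filter Set Topology

theorem AddCircle.mapClusterPt_atTop_nsmul_coe {α β : ℝ} [Fact (0 < β)]
    (hirr : Irrational (α / β)) (x : AddCircle β) :
    MapClusterPt x atTop (fun n : ℕ ↦ n • (α : AddCircle β)) := by
  rw [mapClusterPt_atTop_nsmul_iff_mem_topologicalClosure_zmultiples, ← SetLike.mem_coe,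
    AddSubgroup.topologicalClosure_coe, AddSubgroup.coe_zmultiples,
    (AddCircle.denseRange_zsmul_coe_iff.2 hirr).closure_eq]
  exact mem_univ x

theorem exists_nat_mul_sub_nat_mul_mem_Ioo {α β : ℝ} (hα : 0 < α) (hβ : 0 < β)
    (hirr : Irrational (α / β)) {a b : ℝ} (hab : a < b) :
    ∃ u v : ℕ, (u : ℝ) * α - v * β ∈ Ioo a b := by
  have : Fact (0 < β) := ⟨hβ⟩
  obtain ⟨c, hc⟩ := nonempty_Ioo.2 hab
  have hnhds : (QuotientAddGroup.mk '' Ioo a b : Set (AddCircle β)) ∈ 𝓝 (c : AddCircle β) :=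
    (QuotientAddGroup.isOpenMap_coe _ isOpen_Ioo).mem_nhds ⟨c, hc, rfl⟩
  -- A multiplier `u ≥ N` with `b ≤ N * α` makes the number of `β`s to subtract nonnegative.
  obtain ⟨N, hN⟩ := Archimedean.arch b hα
  obtain ⟨u, ⟨t, ht, htu⟩, hNu⟩ :=
    ((AddCircle.mapClusterPt_atTop_nsmul_coe hirr _).frequently hnhds).and_eventually
      (eventually_ge_atTop N) |>.exists
  obtain ⟨k, hk⟩ := (QuotientAddGroup.eq (s := AddSubgroup.zmultiples β)).1 htu
  simp only [zsmul_eq_mul, nsmul_eq_mul] at hk hN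
  have hkβ : 0 < (k : ℝ) * β := by
    have : (N : ℝ) ≤ u := by exact_mod_cast hNu
    nlinarith [ht.2]
  lift k to ℕ using by exact_mod_cast (pos_of_mul_pos_left hkβ hβ.le).le
  push_cast at hk
  refine ⟨u, k, ?_⟩
  rwa [show (u : ℝ) * α - k * β = t by linarith]

theorem exists_pos_nat_mul_sub_nat_mul_mem_Ioo {α β : ℝ} (hα : 0 < α) (hβ : 0 < β)
    (hirr : Irrational (α / β)) {a b : ℝ} (ha : 0 ≤ a) (hab : a < b) :
    ∃ u v : ℕ, 0 < u ∧ (u : ℝ) * α - v * β ∈ Ioo a b := by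
  obtain ⟨u, v, huv⟩ := exists_nat_mul_sub_nat_mul_mem_Ioo hα hβ hirr hab
  refine ⟨u, v, Nat.pos_of_ne_zero ?_, huv⟩
  rintro rfl
  rw [Nat.cast_zero, zero_mul] at huv
  have : 0 ≤ (v : ℝ) * β := by positivity
  linarith [huv.1]

theorem exists_m_dependent_basis_measures_general
    (α β m : ℝ) (hα : 0 < α) (hβ : 0 < β) (hm : 0 < m)
    (hirr : Irrational (α / β)) :
    ∃ u v w y : ℕ, 0 < u ∧ 0 < y ∧
      0 < (u : ℝ) * α - (v : ℝ) * β ∧ (u : ℝ) * α - (v : ℝ) * β < m ∧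
      0 < (y : ℝ) * β - (w : ℝ) * α ∧ (y : ℝ) * β - (w : ℝ) * α < m ∧
      m < ((u : ℝ) * α - (v : ℝ) * β) + ((y : ℝ) * β - (w : ℝ) * α) := by
  obtain ⟨u, v, hu, hx⟩ := exists_pos_nat_mul_sub_nat_mul_mem_Ioo hα hβ hirr le_rfl hm
  obtain ⟨y, w, hy, hz⟩ := exists_pos_nat_mul_sub_nat_mul_mem_Ioo hβ hα (inv_div α β ▸ hirr.inv)
    (sub_nonneg.2 hx.2.le) (sub_lt_self m hx.1)
  exact ⟨u, v, w, y, hu, hy, hx.1, hx.2, by linarith [hz.1, hx.2], hz.2, by linarith [hz.1]⟩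

/-- Let `α, β` be the transversal measures of the two basic transversal cycles of a
generic straight-line flow on the 2-torus and let `m` be the measure of a transversal
segment, with `0 < m < α + β` and `α/β` irrational. Then there are positive integers
`u, y` and nonnegative integers `v, w` such that the transversal measures
`u·α − v·β` and `y·β − w·α` of the `m`-dependent basic transversal cycles
`a^m(+) = u·a + v·b` and `b^m(+) = w·a + y·b` are each less than `m`, but their sum is
greater than `m`. -/
theorem exists_m_dependent_basis_measures
    (α β m : ℝ) (hα : 0 < α) (hβ : 0 < β) (hm : 0 < m) (hm' : m < α + β)
    (hirr : Irrational (α / β)) :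
    ∃ u v w y : ℕ, 0 < u ∧ 0 < y ∧
      0 < (u : ℝ) * α - (v : ℝ) * β ∧ (u : ℝ) * α - (v : ℝ) * β < m ∧
      0 < (y : ℝ) * β - (w : ℝ) * α ∧ (y : ℝ) * β - (w : ℝ) * α < m ∧
      m < ((u : ℝ) * α - (v : ℝ) * β) + ((y : ℝ) * β - (w : ℝ) * α) :=
  exists_m_dependent_basis_measures_general α β m hα hβ hm hirr
end
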